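/- Let R be a subring of a division ring D and let 0 → M1 → M2 → M3 → 0 be a short exact sequence of left R-modules. Assume that (1) M1 and M3 are D-torsion-free, (2) dim_D M1 and dim_D M3 are finite, and (3) dim_D M1 + dim_D M3 = dim_D M2. Then M2 is also D-torsion-free. -/

import Mathlib

/-
`D ⊗_R -` is right exact, so `D ⊗ M1 → D ⊗ M2 → D ⊗ M3 → 0` is an exact sequence of
finite-dimensional `D`-vector spaces; the dimension count forces `D ⊗ M1 → D ⊗ M2` to be
injective. A diagram chase through the squares `Mi → D ⊗ Mi` then shows that an element of `M2`
dying in `D ⊗ M2` maps to `0` in `M3`, hence comes from an element of `M1` that dies in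
`D ⊗ M1`, and so is `0`.
-/

open scoped TensorProduct

universe u

/-- The balancing relations defining the tensor product `D ⊗_R M` over the (possibly
noncommutative) ring `R` as a quotient of `D ⊗_ℤ M`. -/
def tensorRel (D : Type u) [DivisionRing D] (R : Subring D)
    (M : Type u) [AddCommGroup M] [Module R M] : Submodule ℤ (D ⊗[ℤ] M) :=
  Submodule.span ℤ
    {x | ∃ (d : D) (r : R) (m : M), x = (d * (r : D)) ⊗ₜ[ℤ] m - d ⊗ₜ[ℤ] (r • m)}

/-- The tensor product `D ⊗_R M` of the right `R`-module `D` and the left `R`-module `M`,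
realized as the quotient of `D ⊗_ℤ M` by the balancing relations. -/
abbrev NCTensor (D : Type u) [DivisionRing D] (R : Subring D)
    (M : Type u) [AddCommGroup M] [Module R M] :=
  (D ⊗[ℤ] M) ⧸ tensorRel D R M

section

variable (D : Type u) [DivisionRing D] (R : Subring D)
variable (M : Type u) [AddCommGroup M] [Module R M]

/-- Left multiplication by `d : D` on `D ⊗_ℤ M`. -/
noncomputable def lmulAux (d : D) : (D ⊗[ℤ] M) →ₗ[ℤ] (D ⊗[ℤ] M) :=
  TensorProduct.map ((AddMonoidHom.mulLeft d).toIntLinearMap) LinearMap.id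

lemma lmulAux_rel (d : D) :
    tensorRel D R M ≤ (tensorRel D R M).comap (lmulAux D M d) := by
  rw [tensorRel, Submodule.span_le]
  rintro x ⟨a, r, m, rfl⟩
  have h : (d * (a * (r : D))) ⊗ₜ[ℤ] m - (d * a) ⊗ₜ[ℤ] (r • m) ∈ tensorRel D R M := by
    rw [← mul_assoc]
    exact Submodule.subset_span ⟨d * a, r, m, rfl⟩
  rw [SetLike.mem_coe, Submodule.mem_comap]
  have e : lmulAux D M d ((a * (r : D)) ⊗ₜ[ℤ] m - a ⊗ₜ[ℤ] (r • m)) =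
      (d * (a * (r : D))) ⊗ₜ[ℤ] m - (d * a) ⊗ₜ[ℤ] (r • m) := by
    rw [map_sub]
    rfl
  rw [e]
  exact h

/-- Left multiplication by `d : D` on `D ⊗_R M`. -/
noncomputable def lmulQ (d : D) : NCTensor D R M →ₗ[ℤ] NCTensor D R M :=
  Submodule.mapQ _ _ (lmulAux D M d) (lmulAux_rel D R M d)

lemma lmulQ_mk_tmul (d a : D) (m : M) :
    lmulQ D R M d (Submodule.Quotient.mk (a ⊗ₜ[ℤ] m)) =
      Submodule.Quotient.mk ((d * a) ⊗ₜ[ℤ] m) := by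
  rw [lmulQ, Submodule.mapQ_apply]
  rfl

lemma NCTensor.inductionOn {P : NCTensor D R M → Prop} (x : NCTensor D R M)
    (zero : P 0)
    (tmul : ∀ (a : D) (m : M), P (Submodule.Quotient.mk (a ⊗ₜ[ℤ] m)))
    (add : ∀ x y, P x → P y → P (x + y)) : P x := by
  obtain ⟨y, rfl⟩ := Submodule.Quotient.mk_surjective _ x
  induction y using TensorProduct.induction_on with
  | zero => simpa using zero
  | tmul a m => exact tmul a m
  | add y z hy hz =>
      rw [Submodule.Quotient.mk_add]
      exact add _ _ hy hz

noncomputable instance : SMul D (NCTensor D R M) :=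
  ⟨fun d x => lmulQ D R M d x⟩

lemma nct_smul_def (d : D) (x : NCTensor D R M) : d • x = lmulQ D R M d x := rfl

/-- The left `D`-module structure on `D ⊗_R M`. -/
noncomputable instance : Module D (NCTensor D R M) where
  one_smul x := by
    refine NCTensor.inductionOn D R M (P := fun z => (1 : D) • z = z) x ?_ ?_ ?_
    · simp only [nct_smul_def, map_zero]
    · intro a m
      rw [nct_smul_def, lmulQ_mk_tmul, one_mul]
    · intro x y hx hy
      rw [nct_smul_def, map_add, ← nct_smul_def, ← nct_smul_def, hx, hy]
  mul_smul d e x := by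
    refine NCTensor.inductionOn D R M (P := fun z => (d * e) • z = d • e • z) x ?_ ?_ ?_
    · simp only [nct_smul_def, map_zero]
    · intro a m
      simp only [nct_smul_def, lmulQ_mk_tmul, mul_assoc]
    · intro x y hx hy
      simp only [nct_smul_def, map_add] at hx hy ⊢
      rw [hx, hy]
  smul_zero d := map_zero (lmulQ D R M d)
  smul_add d x y := map_add (lmulQ D R M d) x y
  add_smul d e x := by
    refine NCTensor.inductionOn D R M (P := fun z => (d + e) • z = d • z + e • z) x ?_ ?_ ?_
    · simp only [nct_smul_def, map_zero, add_zero]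
    · intro a m
      simp only [nct_smul_def, lmulQ_mk_tmul, add_mul]
      rw [TensorProduct.add_tmul, Submodule.Quotient.mk_add]
    · intro x y hx hy
      simp only [nct_smul_def, map_add] at hx hy ⊢
      rw [hx, hy]
      abel
  zero_smul x := by
    refine NCTensor.inductionOn D R M (P := fun z => (0 : D) • z = 0) x ?_ ?_ ?_
    · simp only [nct_smul_def, map_zero]
    · intro a m
      rw [nct_smul_def, lmulQ_mk_tmul, zero_mul, TensorProduct.zero_tmul,
        Submodule.Quotient.mk_zero]
    · intro x y hx hy
      rw [nct_smul_def, map_add, ← nct_smul_def, ← nct_smul_def, hx, hy, add_zero]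

/-- The canonical map `M → D ⊗_R M`, `m ↦ 1 ⊗ m`. -/
noncomputable def toNCTensor : M → NCTensor D R M :=
  fun m => Submodule.Quotient.mk ((1 : D) ⊗ₜ[ℤ] m)

/-- A left `R`-module `M` is *`D`-torsion-free* if the canonical map `M → D ⊗_R M`,
`m ↦ 1 ⊗ m`, is injective. -/
def IsDTorsionFree : Prop := Function.Injective (toNCTensor D R M)

end

open Function LinearMap

universe v

theorem Function.Exact.injective_of_rank_add_rank_eq {K : Type*} {V₁ V₂ V₃ : Type v}
    [DivisionRing K] [AddCommGroup V₁] [Module K V₁] [AddCommGroup V₂] [Module K V₂]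
    [AddCommGroup V₃] [Module K V₃] {F : V₁ →ₗ[K] V₂} {G : V₂ →ₗ[K] V₃}
    (hFG : Exact F G) (hG : Surjective G)
    (h₁ : Module.rank K V₁ < Cardinal.aleph0) (h₃ : Module.rank K V₃ < Cardinal.aleph0)
    (hsum : Module.rank K V₁ + Module.rank K V₃ = Module.rank K V₂) :
    Injective F := by
  have hrange : Module.rank K (range F) < Cardinal.aleph0 :=
    (rank_range_le F).trans_lt h₁
  have hker : Module.rank K (range F) + Module.rank K V₃ + Module.rank K (ker F) =
      Module.rank K (range F) + Module.rank K V₃ + 0 := by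
    rw [add_zero, add_right_comm, rank_range_add_rank_ker, hsum, rank_eq_of_surjective hG,
      hFG.linearMap_ker_eq, add_comm]
  rw [← ker_eq_bot, ← Submodule.rank_eq_zero]
  exact Cardinal.eq_of_add_eq_add_left hker (Cardinal.add_lt_aleph0 hrange h₃)

namespace NCTensor

variable (D : Type u) [DivisionRing D] (R : Subring D)
variable {M N P : Type u} [AddCommGroup M] [Module R M] [AddCommGroup N] [Module R N]
  [AddCommGroup P] [Module R P]

noncomputable def mapAux (φ : M →ₗ[R] N) : (D ⊗[ℤ] M) →ₗ[ℤ] (D ⊗[ℤ] N) :=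
  φ.toAddMonoidHom.toIntLinearMap.lTensor D

theorem mapAux_tmul (φ : M →ₗ[R] N) (d : D) (m : M) : mapAux D R φ (d ⊗ₜ m) = d ⊗ₜ φ m :=
  rfl

theorem tensorRel_le_comap_mapAux (φ : M →ₗ[R] N) :
    tensorRel D R M ≤ (tensorRel D R N).comap (mapAux D R φ) := by
  rw [tensorRel, Submodule.span_le]
  rintro _ ⟨d, r, m, rfl⟩
  exact Submodule.subset_span ⟨d, r, φ m, by simp [mapAux_tmul]⟩

theorem tensorRel_le_map_mapAux {φ : M →ₗ[R] N} (hφ : Surjective φ) :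
    tensorRel D R N ≤ (tensorRel D R M).map (mapAux D R φ) := by
  rw [tensorRel, Submodule.span_le]
  rintro _ ⟨d, r, n, rfl⟩
  obtain ⟨m, rfl⟩ := hφ n
  exact ⟨_, Submodule.subset_span ⟨d, r, m, rfl⟩, by simp [mapAux_tmul]⟩

theorem mapAux_lmulAux (φ : M →ₗ[R] N) (d : D) (x : D ⊗[ℤ] M) :
    mapAux D R φ (lmulAux D M d x) = lmulAux D N d (mapAux D R φ x) := by
  induction x using TensorProduct.induction_on with
  | zero => simp only [map_zero]
  | tmul a m => rfl
  | add x y hx hy => simp only [map_add, hx, hy]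

noncomputable def map (φ : M →ₗ[R] N) : NCTensor D R M →ₗ[D] NCTensor D R N where
  toFun := Submodule.mapQ _ _ _ (tensorRel_le_comap_mapAux D R φ)
  map_add' := map_add _
  map_smul' d x := by
    obtain ⟨x, rfl⟩ := Submodule.Quotient.mk_surjective _ x
    exact congrArg Submodule.Quotient.mk (mapAux_lmulAux D R φ d x)

theorem map_toNCTensor (φ : M →ₗ[R] N) (m : M) :
    map D R φ (toNCTensor D R M m) = toNCTensor D R N (φ m) :=
  rfl

theorem map_surjective {φ : M →ₗ[R] N} (hφ : Surjective φ) : Surjective (map D R φ) :=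
  Surjective.of_comp (g := Submodule.Quotient.mk) <| (Submodule.mkQ_surjective _).comp <|
    LinearMap.lTensor_surjective D (g := φ.toAddMonoidHom.toIntLinearMap) hφ

/-- Right exactness of `D ⊗_ℤ -` descends to the quotients because every balancing relation of
`P` is the image of one of `N`. -/
theorem exact_map {φ : M →ₗ[R] N} {ψ : N →ₗ[R] P} (hψ : Surjective ψ) (hφψ : Exact φ ψ) :
    Exact (map D R φ) (map D R ψ) :=
  ((lTensor_exact D hφψ hψ : Exact (mapAux D R φ) (mapAux D R ψ)).exact_mapQ_iff
    (tensorRel_le_comap_mapAux D R φ) (tensorRel_le_comap_mapAux D R ψ)).mpr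
    (inf_le_right.trans (tensorRel_le_map_mapAux D R hψ))

end NCTensor

section TorsionFree

variable (D : Type u) [DivisionRing D] (R : Subring D)
variable {M1 M2 M3 : Type u} [AddCommGroup M1] [Module R M1] [AddCommGroup M2] [Module R M2]
  [AddCommGroup M3] [Module R M3]

noncomputable def toNCTensorHom (M : Type u) [AddCommGroup M] [Module R M] :
    M →+ NCTensor D R M where
  toFun := toNCTensor D R M
  map_zero' := by simp only [toNCTensor, TensorProduct.tmul_zero, Submodule.Quotient.mk_zero]
  map_add' m m' := by
    simp only [toNCTensor, TensorProduct.tmul_add, Submodule.Quotient.mk_add]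

theorem isDTorsionFree_iff (M : Type u) [AddCommGroup M] [Module R M] :
    IsDTorsionFree D R M ↔ ∀ m, toNCTensor D R M m = 0 → m = 0 :=
  injective_iff_map_eq_zero (toNCTensorHom D R M)

theorem isDTorsionFree_of_exact {f : M1 →ₗ[R] M2} {g : M2 →ₗ[R] M3} (hfg : Exact f g)
    (h1 : IsDTorsionFree D R M1) (h3 : IsDTorsionFree D R M3)
    (hF : Injective (NCTensor.map D R f)) : IsDTorsionFree D R M2 := by
  rw [isDTorsionFree_iff] at h1 h3 ⊢
  intro m hm
  have hgm : g m = 0 := h3 _ (by rw [← NCTensor.map_toNCTensor, hm, map_zero])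
  obtain ⟨m1, rfl⟩ := (hfg m).mp hgm
  have hm1 : toNCTensor D R M1 m1 = 0 :=
    hF (by rw [NCTensor.map_toNCTensor, hm, map_zero])
  rw [h1 m1 hm1, map_zero]

end TorsionFree

theorem isDTorsionFree_of_ses_general (D : Type u) [DivisionRing D] (R : Subring D)
    (M1 M2 M3 : Type u) [AddCommGroup M1] [Module R M1] [AddCommGroup M2] [Module R M2]
    [AddCommGroup M3] [Module R M3]
    (f : M1 →ₗ[R] M2) (g : M2 →ₗ[R] M3)
    (hg : Function.Surjective g)
    (hfg : Function.Exact f g)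
    (h1 : IsDTorsionFree D R M1) (h3 : IsDTorsionFree D R M3)
    (d1 : Module.rank D (NCTensor D R M1) < Cardinal.aleph0)
    (d3 : Module.rank D (NCTensor D R M3) < Cardinal.aleph0)
    (hsum : Module.rank D (NCTensor D R M1) + Module.rank D (NCTensor D R M3) =
      Module.rank D (NCTensor D R M2)) :
    IsDTorsionFree D R M2 :=
  isDTorsionFree_of_exact D R hfg h1 h3 <|
    (NCTensor.exact_map D R hg hfg).injective_of_rank_add_rank_eq
      (NCTensor.map_surjective D R hg) d1 d3 hsum

/-- **Lemma (extensions of `D`-torsion-free modules).** Let `R` be a subring of a division ring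
`D` and let `0 → M1 → M2 → M3 → 0` be a short exact sequence of left `R`-modules.  If `M1` and
`M3` are `D`-torsion-free, of finite `D`-dimension, and
`dim_D M1 + dim_D M3 = dim_D M2`, then `M2` is `D`-torsion-free. -/
theorem isDTorsionFree_of_ses (D : Type u) [DivisionRing D] (R : Subring D)
    (M1 M2 M3 : Type u) [AddCommGroup M1] [Module R M1] [AddCommGroup M2] [Module R M2]
    [AddCommGroup M3] [Module R M3]
    (f : M1 →ₗ[R] M2) (g : M2 →ₗ[R] M3)
    (hf : Function.Injective f) (hg : Function.Surjective g)
    (hfg : Function.Exact f g)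
    (h1 : IsDTorsionFree D R M1) (h3 : IsDTorsionFree D R M3)
    (d1 : Module.rank D (NCTensor D R M1) < Cardinal.aleph0)
    (d3 : Module.rank D (NCTensor D R M3) < Cardinal.aleph0)
    (hsum : Module.rank D (NCTensor D R M1) + Module.rank D (NCTensor D R M3) =
      Module.rank D (NCTensor D R M2)) :
    IsDTorsionFree D R M2 :=
  isDTorsionFree_of_ses_general D R M1 M2 M3 f g hg hfg h1 h3 d1 d3 hsum
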